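/- Let R be an L×L real non-singular upper triangular matrix with pairwise distinct diagonal entries, and let p_{i,j,k} denote its power factors. Then for every integer t ≥ 1 and all indices 1 ≤ i ≤ j ≤ L, the (i,j) entry of the matrix power R^t equals Σ_{k=i}^{j} p_{i,j,k} (r_{k,k})^{t-1}. -/

import Mathlib

/-!
For fixed `i` and `k`, the recursion defining `p i · k` says that the row `l ↦ p i l k` is a left
eigenvector of `R` for the eigenvalue `r k k`, while the choice of `p i j j` makes
`∑ₖ p i j k = r i j`. So the formula holds for `t = 1`, and multiplying it on the right by `R`
multiplies the `k`-th term by `r k k`, which is the induction step from `R ^ t` to `R ^ (t + 1)`.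
-/

open Matrix Finset

/-- The power factors `p i j k` of a matrix with entries `r i j`
(indices `1, …, L`), defined recursively by: `p j j j = r j j`;
`p i j k = 0` if `k < i` or `k > j`;
`p i j k = (∑ l = k to j-1, p i l k * r l j) / (r k k - r j j)` for `i ≤ k < j`;
`p i j j = r i j - ∑ l = i to j-1, p i j l` for `i < j`. -/
noncomputable def powerFactor (r : ℕ → ℕ → ℝ) : ℕ → ℕ → ℕ → ℝ
  | i, j, k =>
    if _h0 : k < i ∨ j < k then 0
    else if _h1 : k < j then
      (∑ l ∈ (Finset.Icc k (j - 1)).attach,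
        powerFactor r i l.1 k * r l.1 j) / (r k k - r j j)
    else if _h2 : i < j then
      r i j - ∑ l ∈ (Finset.Icc i (j - 1)).attach, powerFactor r i j l.1
    else r j j
termination_by i j k => (j, k)
decreasing_by
  · have := Finset.mem_Icc.mp l.2
    exact Prod.Lex.left _ _ (by omega)
  · have := Finset.mem_Icc.mp l.2
    exact Prod.Lex.right _ (by omega)

theorem Matrix.IsUpperTriangular.mul_apply_eq_sum_Icc {m R : Type*} [Fintype m] [LinearOrder m]
    [LocallyFiniteOrder m] [NonUnitalNonAssocSemiring R] {M N : Matrix m m R}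
    (hM : M.IsUpperTriangular) (hN : N.IsUpperTriangular) (i j : m) :
    (M * N) i j = ∑ k ∈ Icc i j, M i k * N k j := by
  rw [mul_apply]
  refine (sum_subset (subset_univ _) fun k _ hk => ?_).symm
  rcases not_and_or.mp (mem_Icc.not.mp hk) with hik | hkj
  · rw [hM (not_le.mp hik), zero_mul]
  · rw [hN (not_le.mp hkj), mul_zero]

theorem Fin.sum_Icc_val_add_one {M : Type*} [AddCommMonoid M] {L : ℕ} (a b : Fin L)
    (f : ℕ → M) : ∑ l ∈ Icc (a + 1 : ℕ) (b + 1), f l = ∑ c ∈ Icc a b, f (c + 1) := by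
  rw [← map_add_right_Icc, ← Fin.map_valEmbedding_Icc, Finset.map_map, sum_map]
  rfl

section powerFactor

variable (r : ℕ → ℕ → ℝ) {i j k : ℕ}

theorem powerFactor_self (j : ℕ) : powerFactor r j j j = r j j := by
  rw [powerFactor, dif_neg (by omega), dif_neg (by omega), dif_neg (by omega)]

theorem powerFactor_of_lt (hik : i ≤ k) (hkj : k < j) :
    powerFactor r i j k =
      (∑ l ∈ Icc k (j - 1), powerFactor r i l k * r l j) / (r k k - r j j) := by
  rw [powerFactor, dif_neg (by omega), dif_pos hkj,
    sum_attach (Icc k (j - 1)) fun l => powerFactor r i l k * r l j]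

theorem powerFactor_right (hij : i < j) :
    powerFactor r i j j = r i j - ∑ l ∈ Icc i (j - 1), powerFactor r i j l := by
  rw [powerFactor, dif_neg (by omega), dif_neg (by omega), dif_pos hij,
    sum_attach (Icc i (j - 1)) (powerFactor r i j)]

theorem sum_powerFactor (hij : i ≤ j) : ∑ k ∈ Icc i j, powerFactor r i j k = r i j := by
  rcases hij.eq_or_lt with rfl | hij
  · simp [powerFactor_self]
  · obtain ⟨j, rfl⟩ := Nat.exists_eq_add_of_lt hij
    rw [sum_Icc_succ_top (by omega), powerFactor_right r hij]
    simp

theorem sum_powerFactor_mul (hik : i ≤ k) (hkj : k ≤ j) (hd : k < j → r k k ≠ r j j) :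
    ∑ l ∈ Icc k j, powerFactor r i l k * r l j = powerFactor r i j k * r k k := by
  rcases hkj.eq_or_lt with rfl | hkj
  · simp
  · obtain ⟨j, rfl⟩ : ∃ j', j = j' + 1 := ⟨j - 1, by omega⟩
    have hS : ∑ l ∈ Icc k j, powerFactor r i l k * r l (j + 1) =
        powerFactor r i (j + 1) k * (r k k - r (j + 1) (j + 1)) := by
      rw [powerFactor_of_lt r hik hkj, Nat.add_sub_cancel,
        div_mul_cancel₀ _ (sub_ne_zero.mpr (hd hkj))]
    rw [sum_Icc_succ_top (by omega), hS]
    ring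

theorem sum_sum_powerFactor_pow_mul (t : ℕ) (hd : ∀ k ∈ Ico i j, r k k ≠ r j j) :
    ∑ l ∈ Icc i j, (∑ k ∈ Icc i l, powerFactor r i l k * r k k ^ t) * r l j =
      ∑ k ∈ Icc i j, powerFactor r i j k * r k k ^ (t + 1) := by
  simp_rw [sum_mul]
  rw [sum_comm' (t' := Icc i j) (s' := fun k => Icc k j) fun l k => by simp only [mem_Icc]; omega]
  refine sum_congr rfl fun k hk => ?_
  obtain ⟨hik, hkj⟩ := mem_Icc.mp hk
  calc ∑ l ∈ Icc k j, powerFactor r i l k * r k k ^ t * r l j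
      = (∑ l ∈ Icc k j, powerFactor r i l k * r l j) * r k k ^ t := by
        rw [sum_mul]; exact sum_congr rfl fun _ _ => by ring
    _ = powerFactor r i j k * r k k ^ (t + 1) := by
        rw [sum_powerFactor_mul r hik hkj fun hkj => hd k (mem_Ico.mpr ⟨hik, hkj⟩)]; ring

end powerFactor

theorem power_factor_matrix_power_general
    (L : ℕ) (r : ℕ → ℕ → ℝ)
    (htri : ∀ i j, 1 ≤ i → i ≤ L → 1 ≤ j → j ≤ L → j < i → r i j = 0)
    (hdist : ∀ i j, 1 ≤ i → i ≤ L → 1 ≤ j → j ≤ L → i ≠ j → r i i ≠ r j j)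
    (R : Matrix (Fin L) (Fin L) ℝ)
    (hR : R = Matrix.of fun a b : Fin L => r (a.val + 1) (b.val + 1)) :
    ∀ t : ℕ, 1 ≤ t → ∀ a b : Fin L, a ≤ b →
      (R ^ t) a b = ∑ k ∈ Finset.Icc (a.val + 1) (b.val + 1),
        powerFactor r (a.val + 1) (b.val + 1) k * (r k k) ^ (t - 1) := by
  have hU : R.IsUpperTriangular := fun a b (hba : b.val < a.val) => by
    rw [hR]; exact htri _ _ (by omega) (by omega) (by omega) (by omega) (by omega)
  intro t ht
  obtain ⟨n, rfl⟩ := Nat.exists_eq_add_of_le' ht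
  clear ht
  rw [Nat.add_sub_cancel]
  induction n with
  | zero =>
    intro a b (hab : a.val ≤ b.val)
    simp [hR, sum_powerFactor r (Nat.succ_le_succ hab)]
  | succ n ih =>
    intro a b _hab
    have hd : ∀ k ∈ Ico (a.val + 1) (b.val + 1), r k k ≠ r (b.val + 1) (b.val + 1) :=
      fun k hk => by
        obtain ⟨hak, hkb⟩ := mem_Ico.mp hk
        exact hdist _ _ (by omega) (by omega) (by omega) (by omega) (by omega)
    rw [pow_succ, IsUpperTriangular.mul_apply_eq_sum_Icc (hU.pow _) hU,
      ← sum_sum_powerFactor_pow_mul r _ hd, Fin.sum_Icc_val_add_one]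
    refine sum_congr rfl fun c hc => ?_
    rw [ih a c (mem_Icc.mp hc).1, hR, of_apply]

/-- Theorem 1.3: Let `R` be an `L × L` real non-singular
upper triangular matrix (entries `r i j`, indices `1, …, L`) with pairwise
distinct (nonzero) diagonal entries, and let `p = powerFactor r` be its power
factors.  Then for every `t ≥ 1` and all `1 ≤ i ≤ j ≤ L`,
`(R^t)_{i,j} = ∑_{k=i}^{j} p i j k * (r k k)^(t-1)`. -/
theorem power_factor_matrix_power
    (L : ℕ) (hL : 1 ≤ L) (r : ℕ → ℕ → ℝ)
    (htri : ∀ i j, 1 ≤ i → i ≤ L → 1 ≤ j → j ≤ L → j < i → r i j = 0)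
    (hnonsing : ∀ i, 1 ≤ i → i ≤ L → r i i ≠ 0)
    (hdist : ∀ i j, 1 ≤ i → i ≤ L → 1 ≤ j → j ≤ L → i ≠ j → r i i ≠ r j j)
    (R : Matrix (Fin L) (Fin L) ℝ)
    (hR : R = Matrix.of fun a b : Fin L => r (a.val + 1) (b.val + 1)) :
    ∀ t : ℕ, 1 ≤ t → ∀ a b : Fin L, a ≤ b →
      (R ^ t) a b = ∑ k ∈ Finset.Icc (a.val + 1) (b.val + 1),
        powerFactor r (a.val + 1) (b.val + 1) k * (r k k) ^ (t - 1) :=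
  power_factor_matrix_power_general L r htri hdist R hR
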